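/- Let u_ε ∈ H¹₀(Ω_ε)³ and let u be the weak limit of T_ε(u_ε) in L²(ω; H¹(Y*)³). Then u vanishes on the bottom and top of the cell: u = 0 on ω × ∂Y*_inf and on ω × ∂Y*_sup, where ∂Y*_inf = {y₃ = 0} and ∂Y*_sup = {y₃ = G(ŷ)}. -/

import Mathlib

open MeasureTheory Set Filter
open scoped Classical
noncomputable section

abbrev V3 := Fin 3 → ℝ
abbrev V2 := Fin 2 → ℝ

/-- Partial derivative in direction `i` of a scalar function on `ℝ³`. -/
def pd3 (i : Fin 3) (f : V3 → ℝ) (x : V3) : ℝ := fderiv ℝ f x (Pi.single i 1)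

/-- Partial derivative in direction `i` of a scalar function on `ℝ²`. -/
def pd2 (i : Fin 2) (f : V2 → ℝ) (x : V2) : ℝ := fderiv ℝ f x (Pi.single i 1)

/-- Squared euclidean norm of a vector field at a point. -/
def vnormSq (u : V3 → V3) (x : V3) : ℝ := ∑ i, (u x i) ^ 2

/-- Squared Frobenius norm of the gradient matrix of a vector field. -/
def gradSq (u : V3 → V3) (x : V3) : ℝ := ∑ i, ∑ j, (pd3 j (fun z => u z i) x) ^ 2

/-- Pointwise Frobenius norm `|∇u|`. -/
def gradNorm (u : V3 → V3) (x : V3) : ℝ := Real.sqrt (gradSq u x)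

/-- Pointwise inner product `∇u · ∇v` of two gradient matrices. -/
def gradInner (u v : V3 → V3) (x : V3) : ℝ :=
  ∑ i, ∑ j, pd3 j (fun z => u z i) x * pd3 j (fun z => v z i) x

/-- Divergence of a vector field. -/
def divg (u : V3 → V3) (x : V3) : ℝ := ∑ i, pd3 i (fun z => u z i) x

/-- The unit square `ω = (0,1)²`. -/
def omega2 : Set V2 := {x | 0 < x 0 ∧ x 0 < 1 ∧ 0 < x 1 ∧ x 1 < 1}

/-- Horizontal projection `x̂` of a point of `ℝ³`. -/
def hat (x : V3) : V2 := ![x 0, x 1]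

/-- The thin domain `Ω_ε = {(x̂,x₃) : x̂ ∈ ω, 0 < x₃ < εG(x̂/ε)}`. -/
def thinDom (ε : ℝ) (G : V2 → ℝ) : Set V3 :=
  {x | hat x ∈ omega2 ∧ 0 < x 2 ∧ x 2 < ε * G ![x 0 / ε, x 1 / ε]}

/-- The basic cell `Y* = {(ŷ,y₃) : ŷ ∈ (0,L₁)×(0,L₂), 0 < y₃ < G(ŷ)}`. -/
def Ystar (L1 L2 : ℝ) (G : V2 → ℝ) : Set V3 :=
  {y | 0 < y 0 ∧ y 0 < L1 ∧ 0 < y 1 ∧ y 1 < L2 ∧ 0 < y 2 ∧ y 2 < G ![y 0, y 1]}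

/-- `Y`-periodicity of `G` with periods `L₁, L₂`. -/
def Yper (L1 L2 : ℝ) (G : V2 → ℝ) : Prop :=
  ∀ (y : V2) (k : Fin 2 → ℤ), G (fun i => y i + (k i : ℝ) * ![L1, L2] i) = G y

/-- The `ε`-cell containing `x̂` is entirely included in `ω=(0,1)²` (that is, `x̂ ∈ ω^ε`). -/
def cellOK (ε L1 L2 : ℝ) (xh : V2) : Prop :=
  0 ≤ ⌊xh 0 / (ε * L1)⌋ ∧ 0 ≤ ⌊xh 1 / (ε * L2)⌋ ∧
    ε * L1 * ((⌊xh 0 / (ε * L1)⌋ : ℝ) + 1) ≤ 1 ∧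
    ε * L2 * ((⌊xh 1 / (ε * L2)⌋ : ℝ) + 1) ≤ 1

/-- The unfolding operator `T_ε(φ)(x̂,y) = φ(ε[x̂/ε]_L L + εŷ, εy₃)` on `ω^ε × Y*`, `0` on `Λ^ε × Y*`. -/
def Tunf (ε L1 L2 : ℝ) (φ : V3 → ℝ) (xh : V2) (y : V3) : ℝ :=
  if cellOK ε L1 L2 xh then
    φ ![ε * ((⌊xh 0 / (ε * L1)⌋ : ℝ) * L1 + y 0),
        ε * ((⌊xh 1 / (ε * L2)⌋ : ℝ) * L2 + y 1), ε * y 2]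
  else 0

/-- Union of the cells entirely included in `Ω_ε`. -/
def thinDom0 (ε L1 L2 : ℝ) (G : V2 → ℝ) : Set V3 :=
  {x ∈ thinDom ε G | cellOK ε L1 L2 (hat x)}

/-- Weak convergence in `L²(S)` for functions on `ω × Y* ⊆ ℝ² × ℝ³`. -/
def WeakL2P (S : Set (V2 × V3)) (fn : ℕ → V2 × V3 → ℝ) (f : V2 × V3 → ℝ) : Prop :=
  ∀ g : V2 × V3 → ℝ, MemLp g 2 (volume.restrict S) →
    Tendsto (fun n => ∫ q in S, fn n q * g q) atTop (nhds (∫ q in S, f q * g q))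

/-- Partial derivative in the cell variable `y_i` of a function on `ω × Y*`. -/
def pdY (i : Fin 3) (ψ : V2 × V3 → ℝ) (q : V2 × V3) : ℝ :=
  fderiv ℝ (fun y => ψ (q.1, y)) q.2 (Pi.single i 1)

/-! ### auxiliary lemmas -/

lemma single2_eq : (Pi.single (2:Fin 3) (1:ℝ)) = ![0,0,1] := by
  funext i; fin_cases i <;> simp [Pi.single_apply]

/-- evaluation of the insertNth equiv at index 2 -/
lemma insertNth2_eq (t : ℝ) (p : V2) :
    (Fin.insertNthEquiv (fun _ : Fin 3 => ℝ) 2) (t, p) = ![p 0, p 1, t] := by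
  funext i
  simp only [Fin.insertNthEquiv_apply]
  fin_cases i <;> simp [Fin.insertNth, Fin.succAboveCases] <;> rfl

/-- boundedness helper -/
lemma isBounded_of_coord_bound {n : ℕ} (R : ℝ) (s : Set (Fin n → ℝ))
    (h : ∀ x ∈ s, ∀ i, |x i| ≤ R) : Bornology.IsBounded s := by
  rcases le_or_gt R 0 with hR | hR
  · -- s ⊆ {0} or empty... handle: |x i| ≤ R ≤ 0 forces x = 0
    apply Bornology.IsBounded.subset (Metric.isBounded_closedBall (x := (0 : Fin n → ℝ)) (r := 1))
    intro x hx
    have : ∀ i, |x i| ≤ 1 := fun i => (h x hx i).trans (hR.trans zero_le_one)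
    simpa [Metric.mem_closedBall, dist_zero_right,
      pi_norm_le_iff_of_nonneg (zero_le_one), Real.norm_eq_abs] using this
  · apply Bornology.IsBounded.subset (Metric.isBounded_closedBall (x := (0 : Fin n → ℝ)) (r := R))
    intro x hx
    simpa [Metric.mem_closedBall, dist_zero_right,
      pi_norm_le_iff_of_nonneg hR.le, Real.norm_eq_abs] using h x hx

lemma isOpen_omega2 : IsOpen omega2 := by
  have h0 : Continuous fun x : V2 => x 0 := continuous_apply 0
  have h1 : Continuous fun x : V2 => x 1 := continuous_apply 1
  exact (isOpen_lt continuous_const h0).inter <| (isOpen_lt h0 continuous_const).inter <|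
    (isOpen_lt continuous_const h1).inter (isOpen_lt h1 continuous_const)

lemma continuous_hat3 : Continuous fun y : V3 => (![y 0, y 1] : V2) := by
  apply continuous_pi
  intro i; fin_cases i <;> simp <;> exact continuous_apply _

lemma isOpen_Ystar (L1 L2 : ℝ) (G : V2 → ℝ) (hG : Continuous G) : IsOpen (Ystar L1 L2 G) := by
  have h0 : Continuous fun y : V3 => y 0 := continuous_apply 0
  have h1 : Continuous fun y : V3 => y 1 := continuous_apply 1
  have h2 : Continuous fun y : V3 => y 2 := continuous_apply 2
  exact (isOpen_lt continuous_const h0).inter <| (isOpen_lt h0 continuous_const).inter <|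
    (isOpen_lt continuous_const h1).inter <| (isOpen_lt h1 continuous_const).inter <|
    (isOpen_lt continuous_const h2).inter (isOpen_lt h2 (hG.comp continuous_hat3))

lemma isBounded_omega2 : Bornology.IsBounded omega2 := by
  apply isBounded_of_coord_bound 1
  rintro x ⟨a0, a1, a2, a3⟩ i
  fin_cases i <;> simp [abs_le] <;> constructor <;> linarith

lemma isBounded_Ystar (L1 L2 G1 : ℝ) (G : V2 → ℝ) (hub : ∀ y, G y ≤ G1) :
    Bornology.IsBounded (Ystar L1 L2 G) := by
  set M := max L1 (max L2 G1) with hM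
  have hm1 : L1 ≤ M := le_max_left _ _
  have hm2 : L2 ≤ M := (le_max_left _ _).trans (le_max_right _ _)
  have hm3 : G1 ≤ M := (le_max_right _ _).trans (le_max_right _ _)
  apply isBounded_of_coord_bound M
  rintro y ⟨a0, a1, a2, a3, a4, a5⟩ i
  have h5 : y 2 ≤ G1 := a5.le.trans (hub _)
  fin_cases i
  · show |y 0| ≤ M; exact abs_le.mpr ⟨by linarith, by linarith⟩
  · show |y 1| ≤ M; exact abs_le.mpr ⟨by linarith, by linarith⟩
  · show |y 2| ≤ M; exact abs_le.mpr ⟨by linarith, by linarith⟩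

lemma isBounded_thinDom (ε G1 : ℝ) (hε : 0 < ε) (G : V2 → ℝ) (hub : ∀ y, G y ≤ G1) :
    Bornology.IsBounded (thinDom ε G) := by
  set M := max 1 (ε * G1) with hM
  have hm1 : (1:ℝ) ≤ M := le_max_left _ _
  have hm2 : ε * G1 ≤ M := le_max_right _ _
  apply isBounded_of_coord_bound M
  rintro x ⟨⟨a0, a1, a2, a3⟩, b0, b1⟩ i
  have hb : x 2 ≤ ε * G1 := b1.le.trans (by
    have := hub ![x 0 / ε, x 1 / ε]
    nlinarith)
  have c0 : 0 < x 0 := by simpa [hat] using a0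
  have c1 : x 0 < 1 := by simpa [hat] using a1
  have c2 : 0 < x 1 := by simpa [hat] using a2
  have c3 : x 1 < 1 := by simpa [hat] using a3
  fin_cases i
  · show |x 0| ≤ M; exact abs_le.mpr ⟨by linarith, by linarith⟩
  · show |x 1| ≤ M; exact abs_le.mpr ⟨by linarith, by linarith⟩
  · show |x 2| ≤ M; exact abs_le.mpr ⟨by linarith, by linarith⟩

lemma measurableSet_cellOK (ε L1 L2 : ℝ) : MeasurableSet {xh : V2 | cellOK ε L1 L2 xh} := by
  have hfl : ∀ (c : ℝ) (j : Fin 2), Measurable fun xh : V2 => ⌊xh j / c⌋ :=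
    fun c j => by
      have h : Measurable fun xh : V2 => xh j / c := by fun_prop
      exact Int.measurable_floor.comp h
  have hcast : Measurable (Int.cast : ℤ → ℝ) := fun _ _ => trivial
  have h1 : MeasurableSet {xh : V2 | 0 ≤ ⌊xh 0 / (ε * L1)⌋} :=
    (hfl (ε*L1) 0) (MeasurableSet.of_discrete (s := {z : ℤ | 0 ≤ z}))
  have h2 : MeasurableSet {xh : V2 | 0 ≤ ⌊xh 1 / (ε * L2)⌋} :=
    (hfl (ε*L2) 1) (MeasurableSet.of_discrete (s := {z : ℤ | 0 ≤ z}))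
  have h3 : MeasurableSet {xh : V2 | ε * L1 * ((⌊xh 0 / (ε * L1)⌋ : ℝ) + 1) ≤ 1} := by
    apply measurableSet_le _ measurable_const
    exact (measurable_const.mul ((hcast.comp (hfl (ε*L1) 0)).add measurable_const))
  have h4 : MeasurableSet {xh : V2 | ε * L2 * ((⌊xh 1 / (ε * L2)⌋ : ℝ) + 1) ≤ 1} := by
    apply measurableSet_le _ measurable_const
    exact (measurable_const.mul ((hcast.comp (hfl (ε*L2) 1)).add measurable_const))
  exact (h1.inter (h2.inter (h3.inter h4))).congr (by ext xh; simp [cellOK, Set.mem_setOf_eq, and_assoc])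

lemma measurable_Tunf (ε L1 L2 : ℝ) (φ : V3 → ℝ) (hφ : Measurable φ) :
    Measurable fun q : V2 × V3 => Tunf ε L1 L2 φ q.1 q.2 := by
  have hcast : Measurable (Int.cast : ℤ → ℝ) := fun _ _ => trivial
  have hfl : ∀ (c : ℝ) (j : Fin 2), Measurable fun q : V2 × V3 => ((⌊q.1 j / c⌋ : ℤ) : ℝ) :=
    fun c j => by
      have h : Measurable fun q : V2 × V3 => q.1 j / c := by fun_prop
      exact hcast.comp (Int.measurable_floor.comp h)
  have hvec : Measurable fun q : V2 × V3 =>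
      (![ε * ((⌊q.1 0 / (ε * L1)⌋ : ℝ) * L1 + q.2 0),
        ε * ((⌊q.1 1 / (ε * L2)⌋ : ℝ) * L2 + q.2 1), ε * q.2 2] : V3) := by
    apply measurable_pi_lambda
    intro i
    fin_cases i
    · exact measurable_const.mul (((hfl (ε*L1) 0).mul measurable_const).add
        ((measurable_pi_apply 0).comp measurable_snd))
    · exact measurable_const.mul (((hfl (ε*L2) 1).mul measurable_const).add
        ((measurable_pi_apply 1).comp measurable_snd))
    · exact measurable_const.mul ((measurable_pi_apply 2).comp measurable_snd)
  have hset : MeasurableSet {q : V2 × V3 | cellOK ε L1 L2 q.1} :=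
    measurable_fst (measurableSet_cellOK ε L1 L2)
  exact Measurable.ite hset (hφ.comp hvec) measurable_const

lemma abs_Tunf_le (ε L1 L2 : ℝ) (φ : V3 → ℝ) (C : ℝ) (hC : 0 ≤ C) (h : ∀ x, |φ x| ≤ C)
    (xh : V2) (y : V3) : |Tunf ε L1 L2 φ xh y| ≤ C := by
  unfold Tunf; split
  · exact h _
  · simpa using hC

/-- `pdY 2 ψ` as evaluation of the full derivative. -/
lemma pdY_eq_fderiv (ψ : V2 × V3 → ℝ) (hψ : ContDiff ℝ (⊤ : ℕ∞) ψ) (q : V2 × V3) :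
    pdY 2 ψ q = fderiv ℝ ψ q ((0 : V2), Pi.single (2 : Fin 3) (1:ℝ)) := by
  have h1 : HasFDerivAt (fun y : V3 => (q.1, y)) (ContinuousLinearMap.inr ℝ V2 V3) q.2 :=
    hasFDerivAt_prodMk_right q.1 q.2
  have h2 : HasFDerivAt ψ (fderiv ℝ ψ q) q :=
    (hψ.differentiable (by simp) q).hasFDerivAt
  have h3 : HasFDerivAt (fun y : V3 => ψ (q.1, y))
      ((fderiv ℝ ψ q).comp (ContinuousLinearMap.inr ℝ V2 V3)) q.2 := by
    have := h2.comp q.2 h1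
    exact this
  unfold pdY
  rw [h3.fderiv]
  simp

lemma continuous_pdY (ψ : V2 × V3 → ℝ) (hψ : ContDiff ℝ (⊤ : ℕ∞) ψ) : Continuous (pdY 2 ψ) := by
  have : (pdY 2 ψ) = fun q => fderiv ℝ ψ q ((0 : V2), Pi.single (2 : Fin 3) (1:ℝ)) :=
    funext (pdY_eq_fderiv ψ hψ)
  rw [this]
  exact (hψ.continuous_fderiv (by simp)).clm_apply continuous_const

lemma hasCompactSupport_pdY (ψ : V2 × V3 → ℝ) (hψ : ContDiff ℝ (⊤ : ℕ∞) ψ)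
    (hs : HasCompactSupport ψ) : HasCompactSupport (pdY 2 ψ) := by
  have : (pdY 2 ψ) = (fun L : (V2 × V3) →L[ℝ] ℝ => L ((0 : V2), Pi.single (2 : Fin 3) (1:ℝ)))
      ∘ (fderiv ℝ ψ) := funext fun q => pdY_eq_fderiv ψ hψ q
  rw [this]
  exact (hs.fderiv ℝ).comp_left rfl

/-- derivative of a coordinate-wise affine path. -/
lemma hasDerivAt_path (c1 c2 : ℝ) (t : ℝ) :
    HasDerivAt (fun s : ℝ => (![c1, c2, s] : V3)) ![0,0,1] t := by
  have heq : (fun s : ℝ => (![c1, c2, s] : V3))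
      = fun s => (![c1,c2,0] : V3) + s • (![0,0,1] : V3) := by
    funext s i; fin_cases i <;> simp
  rw [heq]
  simpa using ((hasDerivAt_id t).smul_const (![(0:ℝ),0,1] : V3)).const_add (![c1,c2,0] : V3)

/-- chain rule for `f` along the vertical path scaled by `ε`. -/
lemma hasDerivAt_f_slice (f : V3 → ℝ) (hf : ContDiff ℝ 1 f) (a b ε t : ℝ) :
    HasDerivAt (fun s : ℝ => f ![a, b, ε * s]) (ε * pd3 2 f ![a, b, ε * t]) t := by
  have hpath : HasDerivAt (fun s : ℝ => (![a, b, ε * s] : V3)) (ε • ![0,0,1]) t := by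
    have h0 : HasDerivAt (fun s : ℝ => ε * s) ε t := by
      simpa using (hasDerivAt_id t).const_mul ε
    have heq : (fun s : ℝ => (![a, b, ε * s] : V3))
        = (fun r : ℝ => (![a, b, r] : V3)) ∘ (fun s => ε * s) := rfl
    rw [heq]
    have := (hasDerivAt_path a b (ε * t)).scomp t h0
    simpa [Function.comp] using this
  have hfd : HasFDerivAt f (fderiv ℝ f ![a, b, ε * t]) ![a, b, ε * t] :=
    (hf.differentiable (by simp) _).hasFDerivAt
  have := hfd.comp_hasDerivAt t hpath
  refine this.congr_deriv ?_
  rw [(fderiv ℝ f ![a, b, ε * t]).map_smul]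
  simp [pd3, single2_eq, smul_eq_mul]

/-- chain rule for `ψ(x̂, ·)` along the vertical path. -/
lemma hasDerivAt_psi_slice (ψ : V2 × V3 → ℝ) (hψ : ContDiff ℝ (⊤ : ℕ∞) ψ) (xh : V2) (a b t : ℝ) :
    HasDerivAt (fun s : ℝ => ψ (xh, ![a, b, s])) (pdY 2 ψ (xh, ![a, b, t])) t := by
  have hsl : ContDiff ℝ (⊤ : ℕ∞) (fun y : V3 => ψ (xh, y)) :=
    hψ.comp (contDiff_const.prodMk contDiff_id)
  have hfd : HasFDerivAt (fun y : V3 => ψ (xh, y))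
      (fderiv ℝ (fun y : V3 => ψ (xh, y)) ![a, b, t]) ![a,b,t] :=
    (hsl.differentiable (by simp) _).hasFDerivAt
  have := hfd.comp_hasDerivAt t (hasDerivAt_path a b t)
  refine this.congr_deriv ?_
  simp [pdY, single2_eq]

/-- continuity of `pd3 2 f`. -/
lemma continuous_pd3 (f : V3 → ℝ) (hf : ContDiff ℝ 1 f) : Continuous (pd3 2 f) :=
  (hf.continuous_fderiv (by simp)).clm_apply continuous_const

lemma hasCompactSupport_pd3 (f : V3 → ℝ) (hs : HasCompactSupport f) :
    HasCompactSupport (pd3 2 f) :=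
  (hs.fderiv ℝ).comp_left (g := fun L : V3 →L[ℝ] ℝ => L (Pi.single 2 1)) rfl

lemma continuous_path3 (c1 c2 : ℝ) : Continuous fun t : ℝ => (![c1, c2, t] : V3) := by
  apply continuous_pi
  intro i; fin_cases i <;> simp
  · exact continuous_const
  · exact continuous_const
  · exact continuous_id

lemma continuous_path (c1 c2 e : ℝ) : Continuous fun t : ℝ => (![c1, c2, e * t] : V3) := by
  apply continuous_pi
  intro i; fin_cases i <;> simp
  · exact continuous_const
  · exact continuous_const
  · exact continuous_const.mul continuous_id

/-- FTC zero on the vertical slice. -/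
lemma slice_zero (ε L1 L2 : ℝ) (hε : 0 < ε) (G : V2 → ℝ) (hGper : Yper L1 L2 G)
    (f : V3 → ℝ) (hf : ContDiff ℝ 1 f) (hfs : tsupport f ⊆ thinDom ε G)
    (ψ : V2 × V3 → ℝ) (hψ : ContDiff ℝ (⊤ : ℕ∞) ψ)
    (xh : V2) (k1 k2 : ℤ) (a b : ℝ) (hGnn : 0 ≤ G ![a, b]) :
    ∫ t in Set.Ioo 0 (G ![a, b]),
      (f ![ε * ((k1:ℝ) * L1 + a), ε * ((k2:ℝ) * L2 + b), ε * t] * pdY 2 ψ (xh, ![a, b, t])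
        + (ε * pd3 2 f ![ε * ((k1:ℝ) * L1 + a), ε * ((k2:ℝ) * L2 + b), ε * t])
            * ψ (xh, ![a, b, t])) = 0 := by
  set A := ε * ((k1:ℝ) * L1 + a) with hA
  set B := ε * ((k2:ℝ) * L2 + b) with hB
  set Gy := G ![a, b] with hGy
  set g : ℝ → ℝ := fun t => f ![A, B, ε * t] * ψ (xh, ![a, b, t]) with hg
  set g' : ℝ → ℝ := fun t =>
      f ![A, B, ε * t] * pdY 2 ψ (xh, ![a, b, t])
        + (ε * pd3 2 f ![A, B, ε * t]) * ψ (xh, ![a, b, t]) with hg'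
  have hd : ∀ t : ℝ, HasDerivAt g (g' t) t := by
    intro t
    have := (hasDerivAt_f_slice f hf A B ε t).mul (hasDerivAt_psi_slice ψ hψ xh a b t)
    refine this.congr_deriv ?_
    simp only [hg']
    ring
  have hcψ : Continuous fun t : ℝ => ψ (xh, ![a, b, t]) :=
    hψ.continuous.comp (continuous_const.prodMk (continuous_path3 a b))
  have hcpdψ : Continuous fun t : ℝ => pdY 2 ψ (xh, ![a, b, t]) :=
    (continuous_pdY ψ hψ).comp (continuous_const.prodMk (continuous_path3 a b))
  have hcf : Continuous fun t : ℝ => f ![A, B, ε * t] :=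
    hf.continuous.comp (continuous_path A B ε)
  have hcpf : Continuous fun t : ℝ => pd3 2 f ![A, B, ε * t] :=
    (continuous_pd3 f hf).comp (continuous_path A B ε)
  have hgcont : Continuous g' := by
    exact (hcf.mul hcpdψ).add ((continuous_const.mul hcpf).mul hcψ)
  have hbot : f ![A, B, (0:ℝ)] = 0 := by
    apply image_eq_zero_of_notMem_tsupport
    intro hmem
    have := hfs hmem
    have h2 : (![A, B, (0:ℝ)] : V3) 2 = 0 := by rfl
    rcases this with ⟨-, hpos, -⟩
    rw [h2] at hpos
    exact lt_irrefl 0 hpos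
  have htop : f ![A, B, ε * Gy] = 0 := by
    apply image_eq_zero_of_notMem_tsupport
    intro hmem
    have hthin := hfs hmem
    rcases hthin with ⟨-, -, hlt⟩
    have h0 : (![A, B, ε * Gy] : V3) 0 = A := by norm_num
    have h1 : (![A, B, ε * Gy] : V3) 1 = B := by norm_num
    have h2 : (![A, B, ε * Gy] : V3) 2 = ε * Gy := by rfl
    rw [h0, h1, h2] at hlt
    have hdiv0 : A / ε = (k1:ℝ) * L1 + a := by
      rw [hA]; field_simp
    have hdiv1 : B / ε = (k2:ℝ) * L2 + b := by
      rw [hB]; field_simp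
    rw [hdiv0, hdiv1] at hlt
    have hper : G ![(k1:ℝ) * L1 + a, (k2:ℝ) * L2 + b] = Gy := by
      have := hGper ![a, b] ![k1, k2]
      rw [hGy]
      convert this using 2
      funext i; fin_cases i <;> simp <;> ring
    rw [hper] at hlt
    exact lt_irrefl _ hlt
  have key : ∫ t in (0:ℝ)..Gy, g' t = g Gy - g 0 :=
    intervalIntegral.integral_eq_sub_of_hasDerivAt (fun t _ => hd t)
      (hgcont.intervalIntegrable 0 Gy)
  have : ∫ t in Set.Ioo (0:ℝ) Gy, g' t = g Gy - g 0 := by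
    rw [← integral_Ioc_eq_integral_Ioo, ← intervalIntegral.integral_of_le hGnn]
    exact key
  show ∫ t in Set.Ioo (0:ℝ) Gy, g' t = 0
  rw [this]
  simp [hg, hbot, htop]

lemma exists_abs_bound {α : Type*} [TopologicalSpace α] [Nonempty α] (f : α → ℝ)
    (hc : Continuous f) (hs : HasCompactSupport f) : ∃ C, 0 ≤ C ∧ ∀ x, |f x| ≤ C := by
  obtain ⟨C, hC⟩ := hc.bounded_above_of_compact_support hs
  inhabit α
  exact ⟨C, (abs_nonneg _).trans (by simpa using hC default), fun x => by simpa using hC x⟩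

lemma hasCompactSupport_of_subset (f : V3 → ℝ) (s : Set V3) (hb : Bornology.IsBounded s)
    (hsub : tsupport f ⊆ s) : HasCompactSupport f :=
  Metric.isCompact_of_isClosed_isBounded (isClosed_tsupport f) (hb.subset hsub)

lemma continuous_Avec (ε L1 L2 c1 c2 : ℝ) :
    Continuous fun y : V3 => (![ε * (c1 * L1 + y 0), ε * (c2 * L2 + y 1), ε * y 2] : V3) := by
  apply continuous_pi
  intro i; fin_cases i <;> simp
  · exact continuous_const.mul (continuous_const.add (continuous_apply 0))
  · exact continuous_const.mul (continuous_const.add (continuous_apply 1))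
  · exact continuous_const.mul (continuous_apply 2)

/-- the inner integral over the cell vanishes, for a fixed macroscopic point. -/
lemma innerY_zero (ε L1 L2 G0 G1 : ℝ) (hε : 0 < ε) (hG0 : 0 < G0) (G : V2 → ℝ)
    (hGcont : Continuous G) (hGper : Yper L1 L2 G)
    (hGlb : ∀ y, G0 ≤ G y) (hGub : ∀ y, G y ≤ G1)
    (f : V3 → ℝ) (hf : ContDiff ℝ 1 f) (hfs : tsupport f ⊆ thinDom ε G)
    (ψ : V2 × V3 → ℝ) (hψ : ContDiff ℝ (⊤ : ℕ∞) ψ) (hψs : HasCompactSupport ψ)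
    (xh : V2) (k1 k2 : ℤ) :
    ∫ y in Ystar L1 L2 G,
      (f ![ε * ((k1:ℝ) * L1 + y 0), ε * ((k2:ℝ) * L2 + y 1), ε * y 2] * pdY 2 ψ (xh, y)
        + (ε * pd3 2 f ![ε * ((k1:ℝ) * L1 + y 0), ε * ((k2:ℝ) * L2 + y 1), ε * y 2])
            * ψ (xh, y)) = 0 := by
  have hKf : HasCompactSupport f :=
    hasCompactSupport_of_subset f _ (isBounded_thinDom ε G1 hε G hGub) hfs
  set Φ : V3 → ℝ := fun y =>
    f ![ε * ((k1:ℝ) * L1 + y 0), ε * ((k2:ℝ) * L2 + y 1), ε * y 2] * pdY 2 ψ (xh, y)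
      + (ε * pd3 2 f ![ε * ((k1:ℝ) * L1 + y 0), ε * ((k2:ℝ) * L2 + y 1), ε * y 2])
          * ψ (xh, y) with hΦ
  -- continuity of Φ
  have hA := continuous_Avec ε L1 L2 (k1:ℝ) (k2:ℝ)
  have hcΦ : Continuous Φ := by
    apply Continuous.add
    · exact (hf.continuous.comp hA).mul
        ((continuous_pdY ψ hψ).comp (continuous_const.prodMk continuous_id))
    · exact (continuous_const.mul ((continuous_pd3 f hf).comp hA)).mul
        (hψ.continuous.comp (continuous_const.prodMk continuous_id))
  -- boundedness of Φ
  obtain ⟨Cf, hCf0, hCf⟩ := exists_abs_bound f hf.continuous hKf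
  obtain ⟨Cdf, hCdf0, hCdf⟩ := exists_abs_bound (pd3 2 f) (continuous_pd3 f hf)
    (hasCompactSupport_pd3 f hKf)
  obtain ⟨Cψ, hCψ0, hCψ⟩ := exists_abs_bound ψ hψ.continuous hψs
  obtain ⟨Cpψ, hCpψ0, hCpψ⟩ := exists_abs_bound (pdY 2 ψ) (continuous_pdY ψ hψ)
    (hasCompactSupport_pdY ψ hψ hψs)
  have hbound : ∀ y, |Φ y| ≤ Cf * Cpψ + ε * Cdf * Cψ := by
    intro y
    refine (abs_add_le _ _).trans (add_le_add ?_ ?_)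
    · rw [abs_mul]
      exact mul_le_mul (hCf _) (hCpψ _) (abs_nonneg _) hCf0
    · rw [abs_mul, abs_mul]
      have : |ε| = ε := abs_of_pos hε
      rw [this]
      exact mul_le_mul (mul_le_mul le_rfl (hCdf _) (abs_nonneg _) hε.le) (hCψ _)
        (abs_nonneg _) (by positivity)
  -- integrability of the indicator
  have hYb : Bornology.IsBounded (Ystar L1 L2 G) := isBounded_Ystar L1 L2 G1 G hGub
  have hYm : MeasurableSet (Ystar L1 L2 G) := (isOpen_Ystar L1 L2 G hGcont).measurableSet
  haveI : IsFiniteMeasure (volume.restrict (Ystar L1 L2 G)) :=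
    ⟨by rw [Measure.restrict_apply_univ]; exact hYb.measure_lt_top⟩
  have hIntOn : IntegrableOn Φ (Ystar L1 L2 G) volume := by
    refine memLp_one_iff_integrable.mp (MemLp.of_bound
      (hcΦ.aestronglyMeasurable.restrict) (Cf * Cpψ + ε * Cdf * Cψ)
      (Filter.Eventually.of_forall fun y => ?_))
    simpa [Real.norm_eq_abs] using hbound y
  have hInd : Integrable (Set.indicator (Ystar L1 L2 G) Φ) volume :=
    hIntOn.integrable_indicator hYm
  -- transfer through the measurable equiv splitting off the vertical coordinate
  set e := MeasurableEquiv.piFinSuccAbove (fun _ : Fin 3 => ℝ) 2 with he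
  have mp := measurePreserving_piFinSuccAbove (fun _ : Fin 3 => (volume : Measure ℝ)) 2
  have mps := MeasurePreserving.symm e mp
  have hvol3 : (volume : Measure V3) = Measure.pi fun _ => volume := volume_pi
  have hins : ∀ (t : ℝ) (p : Fin 2 → ℝ), (e.symm (t, p)) = ![p 0, p 1, t] := by
    intro t p
    rw [he, MeasurableEquiv.piFinSuccAbove_symm_apply]
    exact insertNth2_eq t p
  have hIndPi : Integrable (Set.indicator (Ystar L1 L2 G) Φ) (Measure.pi fun _ => volume) := by
    rwa [← hvol3]
  have hIntProd : Integrable ((Set.indicator (Ystar L1 L2 G) Φ) ∘ e.symm)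
      ((volume : Measure ℝ).prod (Measure.pi fun _ => (volume : Measure ℝ))) :=
    (MeasurePreserving.integrable_comp_emb mps e.symm.measurableEmbedding).mpr hIndPi
  have step1 : ∫ y in Ystar L1 L2 G, Φ y = ∫ y, Set.indicator (Ystar L1 L2 G) Φ y :=
    (integral_indicator hYm).symm
  have step2 : ∫ y, Set.indicator (Ystar L1 L2 G) Φ y
      = ∫ p, Set.indicator (Ystar L1 L2 G) Φ (e.symm p)
          ∂((volume : Measure ℝ).prod (Measure.pi fun _ => (volume : Measure ℝ))) := by
    rw [hvol3]
    exact (MeasurePreserving.integral_comp mps e.symm.measurableEmbedding _).symm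
  have step3 : ∫ p, Set.indicator (Ystar L1 L2 G) Φ (e.symm p)
          ∂((volume : Measure ℝ).prod (Measure.pi fun _ => (volume : Measure ℝ)))
      = ∫ p : Fin 2 → ℝ, (∫ t : ℝ, Set.indicator (Ystar L1 L2 G) Φ (e.symm (t, p)))
          ∂(Measure.pi fun _ => (volume : Measure ℝ)) :=
    MeasureTheory.integral_prod_symm _ hIntProd
  have step4 : ∀ p : Fin 2 → ℝ,
      (∫ t : ℝ, Set.indicator (Ystar L1 L2 G) Φ (e.symm (t, p))) = 0 := by
    intro p
    by_cases hbox : 0 < p 0 ∧ p 0 < L1 ∧ 0 < p 1 ∧ p 1 < L2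
    · have heq : (fun t : ℝ => Set.indicator (Ystar L1 L2 G) Φ (e.symm (t, p)))
          = Set.indicator (Set.Ioo 0 (G ![p 0, p 1])) (fun t => Φ ![p 0, p 1, t]) := by
        funext t
        rw [hins t p]
        by_cases ht : t ∈ Set.Ioo (0:ℝ) (G ![p 0, p 1])
        · rw [Set.indicator_of_mem ht]
          apply Set.indicator_of_mem
          refine ⟨by simpa using hbox.1, by simpa using hbox.2.1,
            by simpa using hbox.2.2.1, by simpa using hbox.2.2.2, by simpa using ht.1, ?_⟩
          simpa using ht.2
        · rw [Set.indicator_of_notMem ht]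
          apply Set.indicator_of_notMem
          intro hmem
          rcases hmem with ⟨-, -, -, -, h5, h6⟩
          exact ht ⟨by simpa using h5, by simpa using h6⟩
      rw [heq, integral_indicator measurableSet_Ioo]
      have := slice_zero ε L1 L2 hε G hGper f hf hfs ψ hψ xh k1 k2 (p 0) (p 1)
        (hG0.le.trans (hGlb _))
      convert this using 2 with t
      rfl
    · have heq : (fun t : ℝ => Set.indicator (Ystar L1 L2 G) Φ (e.symm (t, p)))
          = fun _ => (0:ℝ) := by
        funext t
        rw [hins t p]
        apply Set.indicator_of_notMem
        intro hmem
        rcases hmem with ⟨h1, h2, h3, h4, -, -⟩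
        exact hbox ⟨by simpa using h1, by simpa using h2, by simpa using h3, by simpa using h4⟩
      rw [heq]
      simp
  rw [step1, step2, step3]
  simp only [step4]
  simp

section mainzero

variable (L1 L2 G0 G1 ε : ℝ) (G : V2 → ℝ)

lemma measurableSet_S (hGcont : Continuous G) :
    MeasurableSet (omega2 ×ˢ Ystar L1 L2 G) :=
  (isOpen_omega2.measurableSet).prod (isOpen_Ystar L1 L2 G hGcont).measurableSet

lemma finiteMeasure_S (hGcont : Continuous G) (hGub : ∀ y, G y ≤ G1) :
    IsFiniteMeasure (volume.restrict (omega2 ×ˢ Ystar L1 L2 G)) := by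
  constructor
  rw [Measure.restrict_apply_univ]
  have hb : Bornology.IsBounded (omega2 ×ˢ Ystar L1 L2 G) :=
    isBounded_omega2.prod (isBounded_Ystar L1 L2 G1 G hGub)
  exact hb.measure_lt_top

lemma integrableOn_a (hε : 0 < ε) (hGcont : Continuous G) (hGub : ∀ y, G y ≤ G1)
    (f : V3 → ℝ) (hf : ContDiff ℝ 1 f) (hfs : tsupport f ⊆ thinDom ε G)
    (ψ : V2 × V3 → ℝ) (hψ : ContDiff ℝ (⊤ : ℕ∞) ψ) (hψs : HasCompactSupport ψ) :
    IntegrableOn (fun q : V2 × V3 => Tunf ε L1 L2 f q.1 q.2 * pdY 2 ψ q)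
      (omega2 ×ˢ Ystar L1 L2 G) volume := by
  haveI := finiteMeasure_S L1 L2 G1 G hGcont hGub
  have hKf : HasCompactSupport f :=
    hasCompactSupport_of_subset f _ (isBounded_thinDom ε G1 hε G hGub) hfs
  obtain ⟨Cf, hCf0, hCf⟩ := exists_abs_bound f hf.continuous hKf
  obtain ⟨Cpψ, hCpψ0, hCpψ⟩ := exists_abs_bound (pdY 2 ψ) (continuous_pdY ψ hψ)
    (hasCompactSupport_pdY ψ hψ hψs)
  have hmeas : Measurable fun q : V2 × V3 => Tunf ε L1 L2 f q.1 q.2 * pdY 2 ψ q :=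
    (measurable_Tunf ε L1 L2 f hf.continuous.measurable).mul
      (continuous_pdY ψ hψ).measurable
  refine memLp_one_iff_integrable.mp (MemLp.of_bound
    (hmeas.aestronglyMeasurable.restrict) (Cf * Cpψ)
    (Filter.Eventually.of_forall fun q => ?_))
  rw [Real.norm_eq_abs, abs_mul]
  exact mul_le_mul (abs_Tunf_le ε L1 L2 f Cf hCf0 hCf q.1 q.2) (hCpψ _) (abs_nonneg _) hCf0

lemma integrableOn_b (hε : 0 < ε) (hGcont : Continuous G) (hGub : ∀ y, G y ≤ G1)
    (f : V3 → ℝ) (hf : ContDiff ℝ 1 f) (hfs : tsupport f ⊆ thinDom ε G)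
    (ψ : V2 × V3 → ℝ) (hψ : ContDiff ℝ (⊤ : ℕ∞) ψ) (hψs : HasCompactSupport ψ) :
    IntegrableOn (fun q : V2 × V3 => (ε * Tunf ε L1 L2 (pd3 2 f) q.1 q.2) * ψ q)
      (omega2 ×ˢ Ystar L1 L2 G) volume := by
  haveI := finiteMeasure_S L1 L2 G1 G hGcont hGub
  have hKf : HasCompactSupport f :=
    hasCompactSupport_of_subset f _ (isBounded_thinDom ε G1 hε G hGub) hfs
  obtain ⟨Cdf, hCdf0, hCdf⟩ := exists_abs_bound (pd3 2 f) (continuous_pd3 f hf)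
    (hasCompactSupport_pd3 f hKf)
  obtain ⟨Cψ, hCψ0, hCψ⟩ := exists_abs_bound ψ hψ.continuous hψs
  have hmeas : Measurable fun q : V2 × V3 => (ε * Tunf ε L1 L2 (pd3 2 f) q.1 q.2) * ψ q :=
    (measurable_const.mul
      (measurable_Tunf ε L1 L2 (pd3 2 f) (continuous_pd3 f hf).measurable)).mul
      hψ.continuous.measurable
  refine memLp_one_iff_integrable.mp (MemLp.of_bound
    (hmeas.aestronglyMeasurable.restrict) ((ε * Cdf) * Cψ)
    (Filter.Eventually.of_forall fun q => ?_))
  rw [Real.norm_eq_abs, abs_mul, abs_mul, abs_of_pos hε]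
  exact mul_le_mul (mul_le_mul le_rfl
      (abs_Tunf_le ε L1 L2 (pd3 2 f) Cdf hCdf0 hCdf q.1 q.2) (abs_nonneg _) hε.le)
    (hCψ _) (abs_nonneg _) (by positivity)

lemma main_zero (hL1 : 0 < L1) (hL2 : 0 < L2) (hG0 : 0 < G0) (hε : 0 < ε)
    (hGcont : Continuous G) (hGper : Yper L1 L2 G)
    (hGlb : ∀ y, G0 ≤ G y) (hGub : ∀ y, G y ≤ G1)
    (f : V3 → ℝ) (hf : ContDiff ℝ 1 f) (hfs : tsupport f ⊆ thinDom ε G)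
    (ψ : V2 × V3 → ℝ) (hψ : ContDiff ℝ (⊤ : ℕ∞) ψ) (hψs : HasCompactSupport ψ) :
    ∫ q in omega2 ×ˢ Ystar L1 L2 G,
      (Tunf ε L1 L2 f q.1 q.2 * pdY 2 ψ q
        + (ε * Tunf ε L1 L2 (pd3 2 f) q.1 q.2) * ψ q) = 0 := by
  have hInt : IntegrableOn (fun q : V2 × V3 =>
      Tunf ε L1 L2 f q.1 q.2 * pdY 2 ψ q + (ε * Tunf ε L1 L2 (pd3 2 f) q.1 q.2) * ψ q)
      (omega2 ×ˢ Ystar L1 L2 G) volume :=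
    (integrableOn_a L1 L2 G1 ε G hε hGcont hGub f hf hfs ψ hψ hψs).add
      (integrableOn_b L1 L2 G1 ε G hε hGcont hGub f hf hfs ψ hψ hψs)
  have hvol : (volume : Measure (V2 × V3)) = (volume : Measure V2).prod (volume : Measure V3) :=
    rfl
  rw [hvol] at hInt ⊢
  rw [MeasureTheory.setIntegral_prod _ hInt]
  have hx : ∀ x : V2, (∫ y in Ystar L1 L2 G,
      (Tunf ε L1 L2 f x y * pdY 2 ψ (x, y)
        + (ε * Tunf ε L1 L2 (pd3 2 f) x y) * ψ (x, y))) = 0 := by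
    intro x
    by_cases hc : cellOK ε L1 L2 x
    · simp only [Tunf, if_pos hc]
      exact innerY_zero ε L1 L2 G0 G1 hε hG0 G hGcont hGper hGlb hGub f hf hfs ψ hψ hψs x
        ⌊x 0 / (ε * L1)⌋ ⌊x 1 / (ε * L2)⌋
    · simp [Tunf, hc]
  calc ∫ x in omega2, (∫ y in Ystar L1 L2 G,
        (Tunf ε L1 L2 f x y * pdY 2 ψ (x, y)
          + (ε * Tunf ε L1 L2 (pd3 2 f) x y) * ψ (x, y)))
      = ∫ _x in omega2, (0:ℝ) :=
        setIntegral_congr_fun isOpen_omega2.measurableSet (fun x _ => hx x)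
    _ = 0 := by simp

end mainzero


/-- the weak limit `u` of `T_ε(u_ε)` vanishes on
`ω × ∂Y*_inf` and `ω × ∂Y*_sup`. The zero trace at `y₃ = 0` and `y₃ = G(ŷ)` is
expressed by the absence of boundary terms in the integration by parts in `y₃`
against test functions that need not vanish on the top and bottom boundaries. -/
theorem unfolded_limit_zero_trace
    (L1 L2 G0 G1 : ℝ) (hL1 : 0 < L1) (hL2 : 0 < L2) (hG0 : 0 < G0)
    (G : V2 → ℝ) (hGcont : Continuous G) (hGper : Yper L1 L2 G)
    (hGlb : ∀ y, G0 ≤ G y) (hGub : ∀ y, G y ≤ G1)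
    (εn : ℕ → ℝ) (hεpos : ∀ n, 0 < εn n) (hεto : Tendsto εn atTop (nhds 0))
    (un : ℕ → V3 → V3)
    (hreg : ∀ n, ContDiff ℝ 1 (un n))
    -- no-slip: u_ε ∈ H¹₀(Ω_ε)³
    (hsupp : ∀ n i, tsupport (fun x => un n x i) ⊆ thinDom (εn n) G)
    (u : V2 × V3 → V3) (D : V2 × V3 → V3)
    (humem : ∀ j, MemLp (fun q => u q j) 2 (volume.restrict (omega2 ×ˢ Ystar L1 L2 G)))
    (hDmem : ∀ j, MemLp (fun q => D q j) 2 (volume.restrict (omega2 ×ˢ Ystar L1 L2 G)))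
    -- T_ε(u_ε) ⇀ u weakly in L²(ω×Y*)³
    (huconv : ∀ j, WeakL2P (omega2 ×ˢ Ystar L1 L2 G)
      (fun n q => Tunf (εn n) L1 L2 (fun x => un n x j) q.1 q.2) (fun q => u q j))
    -- ε T_ε(∂u_ε/∂x₃) ⇀ D = ∂u/∂y₃ weakly in L²(ω×Y*)³
    (hDconv : ∀ j, WeakL2P (omega2 ×ˢ Ystar L1 L2 G)
      (fun n q => εn n * Tunf (εn n) L1 L2 (fun x => pd3 2 (fun z => un n z j) x) q.1 q.2)
      (fun q => D q j)) :
    ∀ (ψ : V2 × V3 → ℝ), ContDiff ℝ (⊤ : ℕ∞) ψ → HasCompactSupport ψ → ∀ j,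
      ∫ q in omega2 ×ˢ Ystar L1 L2 G, (u q j * pdY 2 ψ q + D q j * ψ q) = 0 := by
  intro ψ hψ hψs j
  set S := omega2 ×ˢ Ystar L1 L2 G with hS
  haveI : IsFiniteMeasure (volume.restrict S) := finiteMeasure_S L1 L2 G1 G hGcont hGub
  -- bounds for ψ and its vertical derivative
  obtain ⟨Cψ, hCψ0, hCψ⟩ := exists_abs_bound ψ hψ.continuous hψs
  obtain ⟨Cpψ, hCpψ0, hCpψ⟩ := exists_abs_bound (pdY 2 ψ) (continuous_pdY ψ hψ)
    (hasCompactSupport_pdY ψ hψ hψs)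
  have hψ2 : MemLp ψ 2 (volume.restrict S) :=
    MemLp.of_bound (hψ.continuous.aestronglyMeasurable.restrict) Cψ
      (Filter.Eventually.of_forall fun q => by simpa [Real.norm_eq_abs] using hCψ q)
  have hpdψ2 : MemLp (pdY 2 ψ) 2 (volume.restrict S) :=
    MemLp.of_bound ((continuous_pdY ψ hψ).aestronglyMeasurable.restrict) Cpψ
      (Filter.Eventually.of_forall fun q => by simpa [Real.norm_eq_abs] using hCpψ q)
  -- the two weak limits
  have h1 := huconv j (pdY 2 ψ) hpdψ2
  have h2 := hDconv j ψ hψ2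
  -- each element of the sequence gives zero
  have hzero : ∀ n,
      (∫ q in S, Tunf (εn n) L1 L2 (fun x => un n x j) q.1 q.2 * pdY 2 ψ q)
        + (∫ q in S, (εn n * Tunf (εn n) L1 L2 (fun x => pd3 2 (fun z => un n z j) x) q.1 q.2)
            * ψ q) = 0 := by
    intro n
    have hfj : ContDiff ℝ 1 (fun x => un n x j) := contDiff_pi.mp (hreg n) j
    have ha := integrableOn_a L1 L2 G1 (εn n) G (hεpos n) hGcont hGub
      (fun x => un n x j) hfj (hsupp n j) ψ hψ hψs
    have hb := integrableOn_b L1 L2 G1 (εn n) G (hεpos n) hGcont hGub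
      (fun x => un n x j) hfj (hsupp n j) ψ hψ hψs
    rw [← integral_add ha hb]
    exact main_zero L1 L2 G0 G1 (εn n) G hL1 hL2 hG0 (hεpos n) hGcont hGper hGlb hGub
      (fun x => un n x j) hfj (hsupp n j) ψ hψ hψs
  have hsum := h1.add h2
  rw [show (fun n =>
      (∫ q in S, Tunf (εn n) L1 L2 (fun x => un n x j) q.1 q.2 * pdY 2 ψ q)
        + ∫ q in S, (εn n * Tunf (εn n) L1 L2 (fun x => pd3 2 (fun z => un n z j) x) q.1 q.2)
            * ψ q) = fun _ => (0:ℝ) from funext hzero] at hsum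
  have hlim : (∫ q in S, u q j * pdY 2 ψ q) + (∫ q in S, D q j * ψ q) = 0 :=
    tendsto_nhds_unique hsum tendsto_const_nhds
  -- integrability of the limit integrands
  have h111 : (1 : ENNReal) / 1 = 1 / 2 + 1 / 2 := by
    rw [one_div_one, ENNReal.add_halves]
  have hInt1 : Integrable (fun q => u q j * pdY 2 ψ q) (volume.restrict S) := by
    have := memLp_one_iff_integrable.mp (MemLp.smul (humem j) hpdψ2 : MemLp _ 1 _)
    simp only [Pi.smul_apply', smul_eq_mul] at this
    exact this.congr (Filter.Eventually.of_forall fun q => by simp [mul_comm])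
  have hInt2 : Integrable (fun q => D q j * ψ q) (volume.restrict S) := by
    have := memLp_one_iff_integrable.mp (MemLp.smul (hDmem j) hψ2 : MemLp _ 1 _)
    simp only [Pi.smul_apply', smul_eq_mul] at this
    exact this.congr (Filter.Eventually.of_forall fun q => by simp [mul_comm])
  rw [integral_add hInt1 hInt2]
  exact hlim
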